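/- Let G be a finite connected simple graph of order n(G) ≥ 2. Then μt(G) = n(G) − diam(G) + 1 if and only if there exists a diametral path x_0,…,x_k in G (a shortest path between two vertices at distance diam(G)) such that for every pair u,v of vertices of G there exists a shortest path u = y_0,…,y_{k'} = v whose internal vertices y_1,…,y_{k'−1} all belong to {x_1,…,x_{k−1}}. -/

import Mathlib

open SimpleGraph

/-- `X` is a total mutual-visibility set of `G`: every two vertices of `G` are `X`-visible,
i.e. joined by a shortest path whose internal vertices avoid `X`. -/
def IsTMVSet {V : Type*} (G : SimpleGraph V) (X : Set V) : Prop :=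
  ∀ x y : V, ∃ p : G.Walk x y, p.length = G.dist x y ∧
    ∀ w ∈ p.support, w ≠ x → w ≠ y → w ∉ X

/-- The total mutual-visibility number of `G`. -/
noncomputable def muT {V : Type*} (G : SimpleGraph V) : ℕ :=
  sSup {n : ℕ | ∃ X : Set V, IsTMVSet G X ∧ X.ncard = n}

/-- `D` is a dominating set of `G`. -/
def IsDomSet {V : Type*} (G : SimpleGraph V) (D : Set V) : Prop :=
  ∀ v : V, v ∉ D → ∃ u ∈ D, G.Adj u v

/-- The domination number of `G`. -/
noncomputable def gammaDom {V : Type*} (G : SimpleGraph V) : ℕ :=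
  sInf {n : ℕ | ∃ D : Set V, IsDomSet G D ∧ D.ncard = n}

/-- `D` is a connected dominating set of `G`. -/
def IsConnDomSet {V : Type*} (G : SimpleGraph V) (D : Set V) : Prop :=
  IsDomSet G D ∧ (G.induce D).Connected

/-- The connected domination number of `G`. -/
noncomputable def gammaConnDom {V : Type*} (G : SimpleGraph V) : ℕ :=
  sInf {n : ℕ | ∃ D : Set V, IsConnDomSet G D ∧ D.ncard = n}

/-- The closed neighborhood of a vertex. -/
def closedNbhd {V : Type*} (G : SimpleGraph V) (v : V) : Set V :=
  insert v (G.neighborSet v)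

/-- The set of simplicial vertices of `G`. -/
def simpSet {V : Type*} (G : SimpleGraph V) : Set V :=
  {v | G.IsClique (G.neighborSet v)}

/-- The set `P(G)` of vertices that appear as the unique common closed neighbor of
two vertices. -/
def pSet {V : Type*} (G : SimpleGraph V) : Set V :=
  {v | ∃ u w : V, closedNbhd G u ∩ closedNbhd G w = {v}}

/-- The set `C(G)` of vertices belonging to every maximum total mutual-visibility set. -/
def compulsorySet {V : Type*} (G : SimpleGraph V) : Set V :=
  {v | ∀ X : Set V, IsTMVSet G X → X.ncard = muT G → v ∈ X}

/-- The set `F(G)` of vertices belonging to no maximum total mutual-visibility set. -/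
def forbiddenSet {V : Type*} (G : SimpleGraph V) : Set V :=
  {v | ∀ X : Set V, IsTMVSet G X → X.ncard = muT G → v ∉ X}

/-- The independent total mutual-visibility number of `G`. -/
noncomputable def muIT {V : Type*} (G : SimpleGraph V) : ℕ :=
  sSup {n : ℕ | ∃ X : Set V, IsTMVSet G X ∧ (∀ u ∈ X, ∀ v ∈ X, ¬ G.Adj u v) ∧ X.ncard = n}

/-- The join `G + H` of two graphs. -/
def joinGraph {V W : Type*} (G : SimpleGraph V) (H : SimpleGraph W) :
    SimpleGraph (V ⊕ W) :=
  SimpleGraph.fromRel (fun x y =>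
    (∃ a b, x = Sum.inl a ∧ y = Sum.inl b ∧ G.Adj a b) ∨
    (∃ a b, x = Sum.inr a ∧ y = Sum.inr b ∧ H.Adj a b) ∨
    (∃ a b, x = Sum.inl a ∧ y = Sum.inr b))

/-- The corona product `G ⊙ H`: a copy of `G` together with a copy `Hᵢ` of `H` for each
vertex `uᵢ` of `G`, where `uᵢ` is joined to all vertices of `Hᵢ`. -/
def coronaProd {V W : Type*} (G : SimpleGraph V) (H : SimpleGraph W) :
    SimpleGraph (V ⊕ V × W) :=
  SimpleGraph.fromRel (fun x y =>
    (∃ a b, x = Sum.inl a ∧ y = Sum.inl b ∧ G.Adj a b) ∨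
    (∃ i w w', x = Sum.inr (i, w) ∧ y = Sum.inr (i, w') ∧ H.Adj w w') ∨
    (∃ i w, x = Sum.inl i ∧ y = Sum.inr (i, w)))

/-- The lexicographic product `G ∘ H`. -/
def lexProd {V W : Type*} (G : SimpleGraph V) (H : SimpleGraph W) :
    SimpleGraph (V × W) where
  Adj x y := G.Adj x.1 y.1 ∨ (x.1 = y.1 ∧ H.Adj x.2 y.2)
  symm := ⟨fun x y h => by
    rcases h with h | ⟨h1, h2⟩
    · exact Or.inl h.symm
    · exact Or.inr ⟨h1.symm, h2.symm⟩⟩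
  loopless := ⟨fun x h => by
    rcases h with h | ⟨_, h⟩
    · exact G.irrefl h
    · exact H.irrefl h⟩

/-- `B` induces a 2-connected subgraph of `G`. -/
def IsTwoConnSet {V : Type*} (G : SimpleGraph V) (B : Set V) : Prop :=
  3 ≤ B.ncard ∧ (G.induce B).Connected ∧ ∀ v ∈ B, (G.induce (B \ {v})).Connected

/-
A total mutual-visibility set `X` must leave free the interior of some shortest path between
two vertices at distance `diam G`; that interior has `diam G - 1` vertices, so
`|X| ≤ n - diam G + 1`. Equality forces the complement of `X` to be exactly the interior of a
diametral path `p`, and conversely the complement of the interior of `p` is a total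
mutual-visibility set precisely when any two vertices are joined by a shortest path whose
internal vertices lie inside `p`.
-/

namespace SimpleGraph.Walk

variable {V : Type*} {G : SimpleGraph V} {x y : V}

def innerVertices (p : G.Walk x y) : Set V := {w | w ∈ p.support ∧ w ≠ x ∧ w ≠ y}

lemma IsPath.ncard_innerVertices {p : G.Walk x y} (hp : p.IsPath) (hxy : x ≠ y) :
    p.innerVertices.ncard = p.length - 1 := by
  classical
  have hinner : p.innerVertices = {w | w ∈ p.support} \ {x, y} := by
    ext w; simp [innerVertices]
  have hsupp : {w | w ∈ p.support}.ncard = p.length + 1 := by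
    rw [← List.coe_toFinset, Set.ncard_coe_finset, List.toFinset_card_of_nodup hp.support_nodup,
      length_support]
  have hends : ({x, y} : Set V) ⊆ {w | w ∈ p.support} :=
    Set.insert_subset p.start_mem_support (Set.singleton_subset_iff.2 p.end_mem_support)
  rw [hinner, Set.ncard_sdiff hends, hsupp, Set.ncard_pair hxy]
  omega

end SimpleGraph.Walk

section

variable {V : Type*} {G : SimpleGraph V}

lemma isTMVSet_compl_iff {I : Set V} :
    IsTMVSet G Iᶜ ↔ ∀ u v, ∃ q : G.Walk u v, q.length = G.dist u v ∧
      ∀ w ∈ q.support, w ≠ u → w ≠ v → w ∈ I := by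
  simp only [IsTMVSet, Set.mem_compl_iff, not_not]

lemma IsTMVSet.connected [Nonempty V] {X : Set V} (hX : IsTMVSet G X) : G.Connected :=
  .mk fun u v => (hX u v).choose.reachable

lemma IsTMVSet.exists_isPath_innerVertices_subset_compl {X : Set V} (hX : IsTMVSet G X)
    (a b : V) :
    ∃ q : G.Walk a b, q.IsPath ∧ q.length = G.dist a b ∧ q.innerVertices ⊆ Xᶜ := by
  obtain ⟨q, hq, hqX⟩ := hX a b
  exact ⟨q, q.isPath_of_length_eq_dist hq, hq, fun w ⟨hw, hwa, hwb⟩ => hqX w hw hwa hwb⟩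

variable [Finite V]

lemma IsTMVSet.ncard_add_diam_le {X : Set V} (hX : IsTMVSet G X) :
    X.ncard + G.diam ≤ Nat.card V + 1 := by
  rcases Nat.eq_zero_or_pos G.diam with h0 | hpos
  · have hX_le := X.ncard_le_card; omega
  have : Nonempty V := (G.nontrivial_of_diam_ne_zero hpos.ne').to_nonempty
  obtain ⟨a, b, hab⟩ := G.exists_dist_eq_diam
  have hne : a ≠ b := by rintro rfl; rw [SimpleGraph.dist_self] at hab; omega
  obtain ⟨q, hqp, hq, hqX⟩ := hX.exists_isPath_innerVertices_subset_compl a b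
  have hinner_le := Set.ncard_le_ncard hqX
  rw [hqp.ncard_innerVertices hne, hq, hab, Set.ncard_compl] at hinner_le
  have hX_le := X.ncard_le_card
  omega

lemma IsTMVSet.exists_innerVertices_eq_compl {X : Set V} (hX : IsTMVSet G X)
    (hXcard : X.ncard + G.diam = Nat.card V + 1) {a b : V} (hab : G.dist a b = G.diam) :
    ∃ q : G.Walk a b, q.length = G.dist a b ∧ q.innerVertices = Xᶜ := by
  have hne : a ≠ b := by
    rintro rfl; have hX_le := X.ncard_le_card; rw [SimpleGraph.dist_self] at hab; omega
  obtain ⟨q, hqp, hq, hqX⟩ := hX.exists_isPath_innerVertices_subset_compl a b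
  refine ⟨q, hq, Set.eq_of_subset_of_ncard_le hqX ?_⟩
  rw [hqp.ncard_innerVertices hne, hq, hab, Set.ncard_compl]
  omega

lemma bddAbove_ncard_isTMVSet :
    BddAbove {n : ℕ | ∃ X : Set V, IsTMVSet G X ∧ X.ncard = n} :=
  ⟨Nat.card V, by rintro n ⟨X, -, rfl⟩; exact X.ncard_le_card⟩

lemma IsTMVSet.ncard_le_muT {X : Set V} (hX : IsTMVSet G X) : X.ncard ≤ muT G :=
  le_csSup bddAbove_ncard_isTMVSet ⟨X, hX, rfl⟩

/-- If no set is a total mutual-visibility set (e.g. `G` disconnected), `muT G` is the junk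
value `sSup ∅ = 0`. -/
lemma exists_isTMVSet_ncard_eq_muT (h : muT G ≠ 0) : ∃ X, IsTMVSet G X ∧ X.ncard = muT G := by
  refine Nat.sSup_mem ?_ bddAbove_ncard_isTMVSet
  by_contra hempty
  exact h (by rw [muT, Set.not_nonempty_iff_eq_empty.1 hempty, csSup_empty, Nat.bot_eq_zero])

lemma muT_le_card_sub_diam_add_one : muT G ≤ Nat.card V - G.diam + 1 := by
  rcases eq_or_ne (muT G) 0 with h | h
  · omega
  obtain ⟨X, hX, hXcard⟩ := exists_isTMVSet_ncard_eq_muT h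
  have hX_le := hX.ncard_add_diam_le
  omega

end

theorem muT_eq_card_sub_diam_add_one_iff_general {V : Type*} [Fintype V] (G : SimpleGraph V)
    (hn : 2 ≤ Fintype.card V) :
    muT G = Fintype.card V - G.diam + 1 ↔
      ∃ (x y : V) (p : G.Walk x y), p.length = G.dist x y ∧ p.length = G.diam ∧
        ∀ u v : V, ∃ q : G.Walk u v, q.length = G.dist u v ∧
          ∀ w ∈ q.support, w ≠ u → w ≠ v → (w ∈ p.support ∧ w ≠ x ∧ w ≠ y) := by
  have hcard : Nat.card V = Fintype.card V := Nat.card_eq_fintype_card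
  have : Nontrivial V := Fintype.one_lt_card_iff_nontrivial.1 hn
  constructor
  · intro hmu
    obtain ⟨X, hX, hXcard⟩ := exists_isTMVSet_ncard_eq_muT (G := G) (by omega)
    have hX_le := hX.ncard_add_diam_le
    obtain ⟨a, b, hab⟩ := G.exists_dist_eq_diam
    obtain ⟨q, hq, hqX⟩ := hX.exists_innerVertices_eq_compl (by omega) hab
    refine ⟨a, b, q, hq, hq.trans hab, (isTMVSet_compl_iff (I := q.innerVertices)).1 ?_⟩
    rwa [hqX, compl_compl]
  · rintro ⟨x, y, p, hpx, hpd, hvis⟩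
    have hX : IsTMVSet G p.innerVerticesᶜ := isTMVSet_compl_iff.2 hvis
    have hdiam : G.diam ≠ 0 := connected_iff_diam_ne_zero.1 hX.connected
    have hxy : x ≠ y := by rintro rfl; rw [SimpleGraph.dist_self] at hpx; omega
    have hp : p.IsPath := p.isPath_of_length_eq_dist hpx
    have hlen := hp.length_lt
    refine le_antisymm (hcard ▸ muT_le_card_sub_diam_add_one) (le_of_eq_of_le ?_ hX.ncard_le_muT)
    rw [Set.ncard_compl, hp.ncard_innerVertices hxy, hpd]
    omega

/-- Characterization of graphs with `μt(G) = n(G) - diam(G) + 1`. -/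
theorem muT_eq_card_sub_diam_add_one_iff {V : Type*} [Fintype V] (G : SimpleGraph V)
    (hG : G.Connected) (hn : 2 ≤ Fintype.card V) :
    muT G = Fintype.card V - G.diam + 1 ↔
      ∃ (x y : V) (p : G.Walk x y), p.length = G.dist x y ∧ p.length = G.diam ∧
        ∀ u v : V, ∃ q : G.Walk u v, q.length = G.dist u v ∧
          ∀ w ∈ q.support, w ≠ u → w ≠ v → (w ∈ p.support ∧ w ≠ x ∧ w ≠ y) :=
  muT_eq_card_sub_diam_add_one_iff_general G hn
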